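/- arXiv:1305.6287 — 2 statements merged into one kernel-verified Lean document; each statement's English description precedes it below -/
import Mathlib

section
/- Let n = p_1^{n_1} ⋯ p_m^{n_m} with n_1 ≤ ⋯ ≤ n_m and suppose n_m ≥ ∏_{i=1}^{m-1} n_i. Then the clique number and chromatic number of G(Z/nZ) both equal n_m · ∏_{i=1}^{m-1}(n_i + 1) − 1. -/
/-- The intersection graph of ideals of a ring: vertices are the proper
non-trivial ideals, two distinct ideals are adjacent iff their intersection
is non-zero. -/
def interGraph (R : Type*) [CommRing R] : SimpleGraph {I : Ideal R // I ≠ ⊥ ∧ I ≠ ⊤} where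
  Adj I J := I ≠ J ∧ I.1 ⊓ J.1 ≠ ⊥
  symm := ⟨by rintro I J ⟨h1, h2⟩; exact ⟨h1.symm, by rwa [inf_comm]⟩⟩
  loopless := ⟨by rintro I ⟨h, -⟩; exact h rfl⟩

/-- Degree of a vertex. -/
noncomputable def vdeg {V : Type*} (G : SimpleGraph V) (v : V) : ℕ :=
  Nat.card {w // G.Adj v w}

/-- Maximum degree. -/
noncomputable def maxDeg {V : Type*} (G : SimpleGraph V) : ℕ := ⨆ v, vdeg G v

/-- Edge chromatic number (chromatic index), as the chromatic number of the line graph. -/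
noncomputable def edgeChrom {V : Type*} (G : SimpleGraph V) : ℕ∞ :=
  (SimpleGraph.lineGraph G).chromaticNumber

/-- The intersection graph of non-empty proper subsets of `Fin m`. -/
def subsetGraph (m : ℕ) : SimpleGraph {S : Finset (Fin m) // S ≠ ∅ ∧ S ≠ Finset.univ} where
  Adj S T := S ≠ T ∧ (S.1 ∩ T.1).Nonempty
  symm := ⟨by rintro S T ⟨h1, h2⟩; exact ⟨h1.symm, by rwa [Finset.inter_comm]⟩⟩
  loopless := ⟨by rintro S ⟨h, -⟩; exact h rfl⟩

/-!
Sending a divisor `d` of `n` to the ideal `dℤ/nℤ` identifies `G(ℤ/nℤ)` with the graph on the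
divisors `d ≠ 1, n` of `n` in which `d ~ e` iff `lcm d e ≠ n`. The divisors `≠ 1` of `n / p` form a
clique of size `n_p ∏_{q ≠ p} (n_q + 1) - 1`, and as many colours suffice: a divisor of `n / p` is
its own colour, and a divisor `d` containing the full power `p ^ n_p` is coloured by a *partner*
`c d ∣ n / p` with `lcm (c d) d = n`. The partner takes the full power of every prime `q ≠ p` at
which `d` falls short of `n`, and stores the exponents of `d` at those primes, one of at most
`∏_{q ≠ p} n_q ≤ n_p` possibilities, in its `p`-exponent; hence `c` is injective.
-/

open Finset

namespace SimpleGraph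

variable {V W : Type*} {G : SimpleGraph V} {H : SimpleGraph W}

theorem IsNClique.map_embedding {k : ℕ} {s : Finset V} (f : G ↪g H) (hs : G.IsNClique k s) :
    H.IsNClique k (s.map f.toEmbedding) := by
  refine ⟨?_, by rw [Finset.card_map, hs.card_eq]⟩
  rw [Finset.coe_map]
  rintro _ ⟨v, hv, rfl⟩ _ ⟨w, hw, rfl⟩ hvw
  exact f.map_adj_iff.2 (hs.isClique hv hw fun h ↦ hvw (h ▸ rfl))

theorem cliqueNum_congr (e : G ≃g H) : G.cliqueNum = H.cliqueNum := by
  unfold cliqueNum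
  congr 1
  ext k
  exact ⟨fun ⟨s, hs⟩ ↦ ⟨_, hs.map_embedding e.toEmbedding⟩,
    fun ⟨s, hs⟩ ↦ ⟨_, hs.map_embedding e.symm.toEmbedding⟩⟩

theorem cliqueNum_eq_of_isNClique_of_colorable [Finite V] {k : ℕ} {s : Finset V}
    (hs : G.IsNClique k s) (hc : G.Colorable k) : G.cliqueNum = k := by
  refine le_antisymm ?_ (hs.card_eq ▸ hs.isClique.card_le_cliqueNum)
  obtain ⟨t, ht⟩ := G.exists_isNClique_cliqueNum
  exact ht.card_eq ▸ ht.isClique.card_le_of_colorable hc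

theorem chromaticNumber_eq_of_isNClique_of_colorable {k : ℕ} {s : Finset V}
    (hs : G.IsNClique k s) (hc : G.Colorable k) : G.chromaticNumber = k :=
  le_antisymm hc.chromaticNumber_le (hs.card_eq ▸ hs.isClique.card_le_chromaticNumber)

end SimpleGraph

namespace ZMod

variable {n : ℕ}

theorem comap_span_natCast {d : ℕ} (hd : d ∣ n) :
    (Ideal.span {(d : ZMod n)}).comap (Int.castRingHom (ZMod n)) = Ideal.span {(d : ℤ)} := by
  have hmap : Ideal.span {(d : ZMod n)} =
      (Ideal.span {(d : ℤ)}).map (Int.castRingHom (ZMod n)) := by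
    simp [Ideal.map_span]
  rw [hmap, Ideal.comap_map_of_surjective _ intCast_surjective, ← RingHom.ker_eq_comap_bot,
    ker_intCastRingHom, sup_eq_left, Ideal.span_singleton_le_span_singleton]
  exact Int.natCast_dvd_natCast.2 hd

theorem span_natCast_inj {d e : ℕ} (hd : d ∣ n) (he : e ∣ n) :
    Ideal.span {(d : ZMod n)} = Ideal.span {(e : ZMod n)} ↔ d = e := by
  rw [← (Ideal.comap_injective_of_surjective (Int.castRingHom (ZMod n)) intCast_surjective).eq_iff,
    comap_span_natCast hd, comap_span_natCast he, Ideal.span_singleton_eq_span_singleton,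
    Int.associated_iff_natAbs]
  simp

theorem span_natCast_eq_bot_iff {d : ℕ} (hd : d ∣ n) : Ideal.span {(d : ZMod n)} = ⊥ ↔ d = n := by
  rw [← span_natCast_inj hd dvd_rfl, natCast_self, Ideal.span_singleton_eq_bot.2 rfl]

theorem span_natCast_eq_top_iff {d : ℕ} (hd : d ∣ n) : Ideal.span {(d : ZMod n)} = ⊤ ↔ d = 1 := by
  rw [← span_natCast_inj hd (one_dvd n), Nat.cast_one, Ideal.span_singleton_one]

theorem span_natCast_inf {d e : ℕ} (hd : d ∣ n) (he : e ∣ n) :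
    Ideal.span {(d : ZMod n)} ⊓ Ideal.span {(e : ZMod n)} =
      Ideal.span {((d.lcm e : ℕ) : ZMod n)} := by
  refine Ideal.comap_injective_of_surjective (Int.castRingHom (ZMod n)) intCast_surjective ?_
  rw [Ideal.comap_inf, comap_span_natCast hd, comap_span_natCast he,
    comap_span_natCast (Nat.lcm_dvd hd he), span_singleton_inf_span_singleton]
  rfl

theorem exists_eq_span_natCast (I : Ideal (ZMod n)) :
    ∃ d, d ∣ n ∧ I = Ideal.span {(d : ZMod n)} := by
  obtain ⟨g, hg⟩ : ∃ g : ℤ, I.comap (Int.castRingHom (ZMod n)) = Ideal.span {g} :=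
    ⟨_, (Submodule.IsPrincipal.span_singleton_generator _).symm⟩
  have hn : (n : ℤ) ∈ I.comap (Int.castRingHom (ZMod n)) := by simp
  refine ⟨g.natAbs, ?_, ?_⟩
  · rw [hg, Ideal.mem_span_singleton] at hn
    exact Int.natAbs_dvd_natAbs.2 hn
  · rw [← Ideal.map_comap_of_surjective (Int.castRingHom (ZMod n)) intCast_surjective I, hg,
      ← Int.span_natAbs, Ideal.map_span]
    simp

end ZMod

def divisorGraph (n : ℕ) : SimpleGraph {d : ℕ // d ∣ n ∧ d ≠ 1 ∧ d ≠ n} where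
  Adj d e := d ≠ e ∧ d.1.lcm e.1 ≠ n
  symm := ⟨by rintro d e ⟨hne, hlcm⟩; exact ⟨hne.symm, by rwa [Nat.lcm_comm]⟩⟩
  loopless := ⟨by rintro d ⟨hne, -⟩; exact hne rfl⟩

def divisorIdeal (n : ℕ) (d : {d : ℕ // d ∣ n ∧ d ≠ 1 ∧ d ≠ n}) :
    {I : Ideal (ZMod n) // I ≠ ⊥ ∧ I ≠ ⊤} :=
  ⟨Ideal.span {(d.1 : ZMod n)}, (ZMod.span_natCast_eq_bot_iff d.2.1).not.2 d.2.2.2,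
    (ZMod.span_natCast_eq_top_iff d.2.1).not.2 d.2.2.1⟩

theorem divisorIdeal_bijective (n : ℕ) : Function.Bijective (divisorIdeal n) := by
  refine ⟨fun d e h ↦ Subtype.ext <| (ZMod.span_natCast_inj d.2.1 e.2.1).1 congr($h.1),
    fun I ↦ ?_⟩
  obtain ⟨d, hd, hI⟩ := ZMod.exists_eq_span_natCast I.1
  refine ⟨⟨d, hd, fun h ↦ I.2.2 ?_, fun h ↦ I.2.1 ?_⟩, Subtype.ext hI.symm⟩
  · rwa [hI, ZMod.span_natCast_eq_top_iff hd]
  · rwa [hI, ZMod.span_natCast_eq_bot_iff hd]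

noncomputable def divisorGraphIsoInterGraph (n : ℕ) : divisorGraph n ≃g interGraph (ZMod n) where
  toEquiv := Equiv.ofBijective _ (divisorIdeal_bijective n)
  map_rel_iff' {d e} := by
    change divisorIdeal n d ≠ divisorIdeal n e ∧
      Ideal.span {(d.1 : ZMod n)} ⊓ Ideal.span {(e.1 : ZMod n)} ≠ ⊥ ↔ d ≠ e ∧ d.1.lcm e.1 ≠ n
    rw [(divisorIdeal_bijective n).injective.ne_iff, ZMod.span_natCast_inf d.2.1 e.2.1,
      ne_eq, ne_eq, ZMod.span_natCast_eq_bot_iff (Nat.lcm_dvd d.2.1 e.2.1)]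

namespace Nat

theorem factorization_prod_pow_of_prime {T : Finset ℕ} (hT : ∀ q ∈ T, q.Prime) (f : ℕ → ℕ)
    (r : ℕ) : (∏ q ∈ T, q ^ f q).factorization r = if r ∈ T then f r else 0 := by
  rw [factorization_prod fun q hq ↦ pow_ne_zero _ (hT q hq).ne_zero, Finset.sum_apply',
    Finset.sum_congr rfl fun q hq ↦ by rw [(hT q hq).factorization_pow, Finsupp.single_apply],
    Finset.sum_ite_eq' T r f]

theorem card_divisors_of_primeFactors_subset {m : ℕ} {T : Finset ℕ} (hm : m ≠ 0)
    (hT : m.primeFactors ⊆ T) : #m.divisors = ∏ q ∈ T, (m.factorization q + 1) := by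
  rw [card_divisors hm]
  refine prod_subset hT fun q _ hq ↦ ?_
  rw [← support_factorization, Finsupp.notMem_support_iff] at hq
  rw [hq, zero_add]

variable {n p d : ℕ}

theorem div_ne_zero_of_mem_primeFactors (hp : p ∈ n.primeFactors) : n / p ≠ 0 :=
  (div_ne_zero_iff_of_dvd (dvd_of_mem_primeFactors hp)).2
    ⟨(mem_primeFactors.1 hp).2.2, (prime_of_mem_primeFactors hp).ne_zero⟩

theorem factorization_div_prime (hp : p ∈ n.primeFactors) (q : ℕ) :
    (n / p).factorization q = if q = p then n.factorization p - 1 else n.factorization q := by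
  rw [factorization_div (dvd_of_mem_primeFactors hp),
    (prime_of_mem_primeFactors hp).factorization, Finsupp.tsub_apply, Finsupp.single_apply]
  by_cases h : q = p
  · subst h; simp
  · simp [h, Ne.symm h]

theorem dvd_div_prime_iff (hp : p ∈ n.primeFactors) (hd : d ∣ n) :
    d ∣ n / p ↔ d.factorization p < n.factorization p := by
  have hn : n ≠ 0 := (mem_primeFactors.1 hp).2.2
  have hnp : n.factorization p ≠ 0 := Finsupp.mem_support_iff.1 hp
  have hd0 : d ≠ 0 := ne_zero_of_dvd_ne_zero hn hd
  have hle := (factorization_le_iff_dvd hd0 hn).2 hd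
  rw [← factorization_le_iff_dvd hd0 (div_ne_zero_of_mem_primeFactors hp), Finsupp.le_def]
  simp_rw [factorization_div_prime hp]
  refine ⟨fun h ↦ by have := h p; rw [if_pos rfl] at this; omega, fun h q ↦ ?_⟩
  split_ifs with hq
  · subst hq; omega
  · exact hle q

theorem card_divisors_div_prime (hp : p ∈ n.primeFactors) :
    #(n / p).divisors =
      n.factorization p * ∏ q ∈ n.primeFactors.erase p, (n.factorization q + 1) := by
  obtain ⟨-, hpn, hn⟩ := mem_primeFactors.1 hp
  have hnp : n.factorization p ≠ 0 := Finsupp.mem_support_iff.1 hp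
  rw [card_divisors_of_primeFactors_subset (div_ne_zero_of_mem_primeFactors hp)
    (primeFactors_mono (div_dvd_of_dvd hpn) hn), ← mul_prod_erase _ _ hp,
    factorization_div_prime hp, if_pos rfl, Nat.sub_add_cancel (one_le_iff_ne_zero.2 hnp)]
  exact congrArg _ <| prod_congr rfl fun q hq ↦ by
    rw [factorization_div_prime hp, if_neg (ne_of_mem_erase hq)]

end Nat

section DivisorColoring

variable {n p d : ℕ}

variable (n p) in
def deficientPrimes (d : ℕ) : Finset ℕ :=
  {q ∈ n.primeFactors.erase p | d.factorization q < n.factorization q}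

variable (n p) in
/-- The position of the exponents of `d` at its deficient primes, encoded as a divisor of
`∏ q ^ (n_q - 1)`, in some enumeration of those divisors; only injectivity and the bound
`deficiencyIndex_lt` matter. -/
noncomputable def deficiencyIndex (d : ℕ) : ℕ :=
  (∏ q ∈ deficientPrimes n p d, q ^ (n.factorization q - 1)).divisors.toList.idxOf
    (∏ q ∈ deficientPrimes n p d, q ^ d.factorization q)

variable (n p) in
noncomputable def partner (d : ℕ) : ℕ :=
  p ^ deficiencyIndex n p d * ∏ q ∈ deficientPrimes n p d, q ^ n.factorization q

theorem prime_of_mem_deficientPrimes {q : ℕ} (hq : q ∈ deficientPrimes n p d) : q.Prime :=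
  Nat.prime_of_mem_primeFactors (mem_of_mem_erase (mem_filter.1 hq).1)

theorem prod_pow_deficientPrimes_ne_zero (f : ℕ → ℕ) : ∏ q ∈ deficientPrimes n p d, q ^ f q ≠ 0 :=
  prod_ne_zero_iff.2 fun _ hq ↦ pow_ne_zero _ (prime_of_mem_deficientPrimes hq).ne_zero

theorem factorization_eq_of_notMem_deficientPrimes (hp : p ∈ n.primeFactors) (hd : d ∣ n)
    (hfull : ¬d ∣ n / p) {q : ℕ} (hq : q ∉ deficientPrimes n p d) :
    d.factorization q = n.factorization q := by
  have hn : n ≠ 0 := (Nat.mem_primeFactors.1 hp).2.2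
  have hle := (Nat.factorization_le_iff_dvd (ne_zero_of_dvd_ne_zero hn hd) hn).2 hd q
  rw [Nat.dvd_div_prime_iff hp hd] at hfull
  by_cases hqp : q = p
  · subst hqp; omega
  by_cases hqn : q ∈ n.primeFactors
  · simp only [deficientPrimes, mem_filter, mem_erase, not_and, not_lt] at hq
    exact le_antisymm hle (hq ⟨hqp, hqn⟩)
  · rw [← Nat.support_factorization, Finsupp.notMem_support_iff] at hqn
    omega

theorem factorization_partner (hp : p.Prime) (r : ℕ) :
    (partner n p d).factorization r =
      if r = p then deficiencyIndex n p d
      else if r ∈ deficientPrimes n p d then n.factorization r else 0 := by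
  rw [partner,
    Nat.factorization_mul (pow_ne_zero _ hp.ne_zero) (prod_pow_deficientPrimes_ne_zero _),
    Finsupp.add_apply, hp.factorization_pow, Finsupp.single_apply,
    Nat.factorization_prod_pow_of_prime fun q ↦ prime_of_mem_deficientPrimes]
  by_cases hr : r = p
  · subst hr; simp [deficientPrimes]
  · simp [hr, Ne.symm hr]

theorem prod_pow_mem_divisors_deficientPrimes :
    ∏ q ∈ deficientPrimes n p d, q ^ d.factorization q ∈
      (∏ q ∈ deficientPrimes n p d, q ^ (n.factorization q - 1)).divisors :=
  Nat.mem_divisors.2 ⟨prod_dvd_prod_of_dvd _ _ fun q hq ↦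
    pow_dvd_pow q (Nat.le_sub_one_of_lt (mem_filter.1 hq).2), prod_pow_deficientPrimes_ne_zero _⟩

theorem deficiencyIndex_lt
    (hbig : ∏ q ∈ n.primeFactors.erase p, n.factorization q ≤ n.factorization p) :
    deficiencyIndex n p d < n.factorization p := by
  set S := deficientPrimes n p d
  have hS : S ⊆ n.primeFactors.erase p := filter_subset _ _
  have hpos : ∀ q ∈ n.primeFactors.erase p, 0 < n.factorization q := fun q hq ↦
    Nat.pos_of_ne_zero (Finsupp.mem_support_iff.1 (mem_of_mem_erase hq))
  calc deficiencyIndex n p d < #(∏ q ∈ S, q ^ (n.factorization q - 1)).divisors := by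
        rw [deficiencyIndex, ← length_toList]
        exact List.idxOf_lt_length_of_mem (mem_toList.2 prod_pow_mem_divisors_deficientPrimes)
    _ = ∏ q ∈ S, n.factorization q := by
        rw [Nat.card_divisors_of_primeFactors_subset (prod_pow_deficientPrimes_ne_zero _)
          fun q hq ↦ ?_]
        · refine prod_congr rfl fun q hq ↦ ?_
          rw [Nat.factorization_prod_pow_of_prime (fun q ↦ prime_of_mem_deficientPrimes),
            if_pos hq, Nat.sub_add_cancel (hpos q (hS hq))]
        · rw [← Nat.support_factorization, Finsupp.mem_support_iff,
            Nat.factorization_prod_pow_of_prime (fun q ↦ prime_of_mem_deficientPrimes)] at hq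
          by_contra h
          exact hq (if_neg h)
    _ ≤ ∏ q ∈ n.primeFactors.erase p, n.factorization q :=
        prod_le_prod_of_subset_of_one_le' hS fun q hq _ ↦ hpos q hq
    _ ≤ n.factorization p := hbig

theorem partner_ne_zero (hp : p.Prime) : partner n p d ≠ 0 :=
  mul_ne_zero (pow_ne_zero _ hp.ne_zero) (prod_pow_deficientPrimes_ne_zero _)

theorem partner_dvd_div_prime (hp : p ∈ n.primeFactors)
    (hbig : ∏ q ∈ n.primeFactors.erase p, n.factorization q ≤ n.factorization p) :
    partner n p d ∣ n / p := by
  have pp := Nat.prime_of_mem_primeFactors hp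
  have hidx := deficiencyIndex_lt (d := d) hbig
  rw [← Nat.factorization_le_iff_dvd (partner_ne_zero pp) (Nat.div_ne_zero_of_mem_primeFactors hp)]
  intro r
  rw [factorization_partner pp, Nat.factorization_div_prime hp]
  split_ifs <;> omega

theorem lcm_partner (hp : p ∈ n.primeFactors)
    (hbig : ∏ q ∈ n.primeFactors.erase p, n.factorization q ≤ n.factorization p)
    (hd : d ∣ n) (hfull : ¬d ∣ n / p) : (partner n p d).lcm d = n := by
  obtain ⟨pp, -, hn⟩ := Nat.mem_primeFactors.1 hp
  have hd0 : d ≠ 0 := ne_zero_of_dvd_ne_zero hn hd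
  have hidx := deficiencyIndex_lt (d := d) hbig
  refine Nat.eq_of_factorization_eq (Nat.lcm_ne_zero (partner_ne_zero pp) hd0) hn fun r ↦ ?_
  rw [Nat.factorization_lcm (partner_ne_zero pp) hd0, Finsupp.sup_apply, factorization_partner pp]
  by_cases hr : r ∈ deficientPrimes n p d
  · have hlt := (mem_filter.1 hr).2
    rw [if_neg (ne_of_mem_erase (mem_filter.1 hr).1), if_pos hr]
    omega
  · have heq := factorization_eq_of_notMem_deficientPrimes hp hd hfull hr
    split_ifs with hrp
    · subst hrp; omega
    · omega

theorem partner_ne_one (hp : p ∈ n.primeFactors) (hd : d ∣ n) (hdn : d ≠ n)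
    (hfull : ¬d ∣ n / p) : partner n p d ≠ 1 := by
  obtain ⟨pp, -, hn⟩ := Nat.mem_primeFactors.1 hp
  obtain ⟨q, hq⟩ : (deficientPrimes n p d).Nonempty := by
    by_contra hS
    rw [not_nonempty_iff_eq_empty] at hS
    exact hdn <| Nat.eq_of_factorization_eq (ne_zero_of_dvd_ne_zero hn hd) hn fun r ↦
      factorization_eq_of_notMem_deficientPrimes hp hd hfull (hS ▸ notMem_empty r)
  intro h
  have := factorization_partner (n := n) (d := d) pp q
  rw [h, Nat.factorization_one, if_neg (ne_of_mem_erase (mem_filter.1 hq).1), if_pos hq] at this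
  exact Finsupp.mem_support_iff.1 (mem_of_mem_erase (mem_filter.1 hq).1) this.symm

theorem mem_deficientPrimes_iff_factorization_partner (hp : p.Prime) {q : ℕ} :
    q ∈ deficientPrimes n p d ↔ q ≠ p ∧ (partner n p d).factorization q ≠ 0 := by
  rw [factorization_partner hp]
  refine ⟨fun hq ↦ ?_, fun ⟨hqp, hq⟩ ↦ ?_⟩
  · have hqp := ne_of_mem_erase (mem_filter.1 hq).1
    rw [if_neg hqp, if_pos hq]
    exact ⟨hqp, Finsupp.mem_support_iff.1 (mem_of_mem_erase (mem_filter.1 hq).1)⟩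
  · rw [if_neg hqp] at hq
    by_contra h
    exact hq (if_neg h)

theorem eq_of_partner_eq (hp : p ∈ n.primeFactors) {e : ℕ} (hd : d ∣ n) (he : e ∣ n)
    (hfd : ¬d ∣ n / p) (hfe : ¬e ∣ n / p) (h : partner n p d = partner n p e) : d = e := by
  obtain ⟨pp, -, hn⟩ := Nat.mem_primeFactors.1 hp
  have hS : deficientPrimes n p d = deficientPrimes n p e := by
    ext q
    rw [mem_deficientPrimes_iff_factorization_partner pp,
      mem_deficientPrimes_iff_factorization_partner pp, h]
  have hidx : deficiencyIndex n p d = deficiencyIndex n p e := by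
    have hd' := factorization_partner (n := n) (d := d) pp p
    have he' := factorization_partner (n := n) (d := e) pp p
    rw [if_pos rfl] at hd' he'
    rw [← hd', ← he', h]
  have hm : ∏ q ∈ deficientPrimes n p d, q ^ d.factorization q =
      ∏ q ∈ deficientPrimes n p d, q ^ e.factorization q := by
    rw [deficiencyIndex, deficiencyIndex, ← hS, List.idxOf_inj] at hidx
    · exact hidx
    · exact mem_toList.2 prod_pow_mem_divisors_deficientPrimes
  refine Nat.eq_of_factorization_eq (ne_zero_of_dvd_ne_zero hn hd) (ne_zero_of_dvd_ne_zero hn he)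
    fun r ↦ ?_
  by_cases hr : r ∈ deficientPrimes n p d
  · have := congrArg (·.factorization r) hm
    simpa only [Nat.factorization_prod_pow_of_prime (fun q ↦ prime_of_mem_deficientPrimes),
      if_pos hr] using this
  · rw [factorization_eq_of_notMem_deficientPrimes hp hd hfd hr,
      factorization_eq_of_notMem_deficientPrimes hp he hfe (hS ▸ hr)]

variable (n p) in
noncomputable def divisorColor (d : ℕ) : ℕ := if d ∣ n / p then d else partner n p d

theorem divisorColor_mem (hp : p ∈ n.primeFactors)
    (hbig : ∏ q ∈ n.primeFactors.erase p, n.factorization q ≤ n.factorization p)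
    (d : {d : ℕ // d ∣ n ∧ d ≠ 1 ∧ d ≠ n}) : divisorColor n p d ∈ (n / p).divisors.erase 1 := by
  rw [mem_erase, Nat.mem_divisors, divisorColor]
  refine ⟨?_, ?_, Nat.div_ne_zero_of_mem_primeFactors hp⟩ <;> split_ifs with hfull
  · exact d.2.2.1
  · exact partner_ne_one hp d.2.1 d.2.2.2 hfull
  · exact hfull
  · exact partner_dvd_div_prime hp hbig

theorem divisorColor_ne_of_adj (hp : p ∈ n.primeFactors)
    (hbig : ∏ q ∈ n.primeFactors.erase p, n.factorization q ≤ n.factorization p)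
    {d e : {d : ℕ // d ∣ n ∧ d ≠ 1 ∧ d ≠ n}} (hde : (divisorGraph n).Adj d e) :
    divisorColor n p d ≠ divisorColor n p e := by
  obtain ⟨hne, hlcm⟩ := hde
  rw [ne_eq, Subtype.ext_iff] at hne
  unfold divisorColor
  split_ifs with hd he he
  · exact hne
  · exact fun h ↦ hlcm (by rw [h, lcm_partner hp hbig e.2.1 he])
  · exact fun h ↦ hlcm (by rw [← h, Nat.lcm_comm, lcm_partner hp hbig d.2.1 hd])
  · exact fun h ↦ hne (eq_of_partner_eq hp d.2.1 e.2.1 hd he h)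

theorem divisorGraph_colorable (hp : p ∈ n.primeFactors)
    (hbig : ∏ q ∈ n.primeFactors.erase p, n.factorization q ≤ n.factorization p) :
    (divisorGraph n).Colorable #((n / p).divisors.erase 1) := by
  let C : (divisorGraph n).Coloring ((n / p).divisors.erase 1) :=
    .mk (fun d ↦ ⟨divisorColor n p d, divisorColor_mem hp hbig d⟩)
      fun hde h ↦ divisorColor_ne_of_adj hp hbig hde congr($h.1)
  simpa using C.colorable

theorem divisorGraph_isNClique (hp : p ∈ n.primeFactors) :
    (divisorGraph n).IsNClique #((n / p).divisors.erase 1)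
      (((n / p).divisors.erase 1).subtype fun d ↦ d ∣ n ∧ d ≠ 1 ∧ d ≠ n) := by
  obtain ⟨pp, hpn, hn⟩ := Nat.mem_primeFactors.1 hp
  have hlt : n / p < n := Nat.div_lt_self (Nat.pos_of_ne_zero hn) pp.one_lt
  have hnp : 0 < n / p := Nat.pos_of_ne_zero (Nat.div_ne_zero_of_mem_primeFactors hp)
  have hK : ∀ d ∈ (n / p).divisors.erase 1, d ∣ n / p ∧ d ≠ 1 := fun d hd ↦
    ⟨Nat.dvd_of_mem_divisors (mem_of_mem_erase hd), ne_of_mem_erase hd⟩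
  refine ⟨fun d hd e he hde ↦ ⟨hde, fun h ↦ ?_⟩, ?_⟩
  · have hdvd := Nat.lcm_dvd (hK _ (mem_subtype.1 hd)).1 (hK _ (mem_subtype.1 he)).1
    rw [h] at hdvd
    exact hlt.not_ge (Nat.le_of_dvd hnp hdvd)
  · rw [card_subtype, filter_true_of_mem fun d hd ↦ ?_]
    have hdn := (hK d hd).1
    exact ⟨hdn.trans (Nat.div_dvd_of_dvd hpn), (hK d hd).2,
      fun h ↦ hlt.not_ge (Nat.le_of_dvd hnp (by rwa [h] at hdn))⟩

theorem finite_divisorGraph_vertices (hn : n ≠ 0) : Finite {d : ℕ // d ∣ n ∧ d ≠ 1 ∧ d ≠ n} :=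
  (n.divisors.finite_toSet.subset fun _ (hd : _ ∣ n ∧ _) ↦ Nat.mem_divisors.2 ⟨hd.1, hn⟩).to_subtype

end DivisorColoring

theorem stmt7_general (n : ℕ) (p : ℕ) (hp : p ∈ n.primeFactors)
    (hbig : ∏ q ∈ n.primeFactors.erase p, n.factorization q ≤ n.factorization p) :
    (interGraph (ZMod n)).cliqueNum =
      n.factorization p * ∏ q ∈ n.primeFactors.erase p, (n.factorization q + 1) - 1 ∧
    (interGraph (ZMod n)).chromaticNumber =
      ((n.factorization p * ∏ q ∈ n.primeFactors.erase p, (n.factorization q + 1) - 1 : ℕ) : ℕ∞) := by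
  have := finite_divisorGraph_vertices (Nat.mem_primeFactors.1 hp).2.2
  have hcard : #((n / p).divisors.erase 1) =
      n.factorization p * ∏ q ∈ n.primeFactors.erase p, (n.factorization q + 1) - 1 := by
    rw [card_erase_of_mem (Nat.one_mem_divisors.2 (Nat.div_ne_zero_of_mem_primeFactors hp)),
      Nat.card_divisors_div_prime hp]
  have hclique := divisorGraph_isNClique hp
  have hcol := divisorGraph_colorable hp hbig
  rw [hcard] at hclique hcol
  rw [← SimpleGraph.cliqueNum_congr (divisorGraphIsoInterGraph n),
    ← SimpleGraph.chromaticNumber_congr (divisorGraphIsoInterGraph n)]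
  exact ⟨SimpleGraph.cliqueNum_eq_of_isNClique_of_colorable hclique hcol,
    SimpleGraph.chromaticNumber_eq_of_isNClique_of_colorable hclique hcol⟩

theorem stmt7 (n : ℕ) (hn : 1 < n) (p : ℕ) (hp : p ∈ n.primeFactors)
    (hbig : ∏ q ∈ n.primeFactors.erase p, n.factorization q ≤ n.factorization p) :
    (interGraph (ZMod n)).cliqueNum =
      n.factorization p * ∏ q ∈ n.primeFactors.erase p, (n.factorization q + 1) - 1 ∧
    (interGraph (ZMod n)).chromaticNumber =
      ((n.factorization p * ∏ q ∈ n.primeFactors.erase p, (n.factorization q + 1) - 1 : ℕ) : ℕ∞) :=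
  stmt7_general n p hp hbig
end

section
/- Let m ≥ 2 be even and n = (p_1 ⋯ p_m)^α for distinct primes p_i and α ≥ 1. Then the clique number and chromatic number of G(Z/nZ) both equal ∑_{i=0}^{m/2 − 1} C(m,i) α^{m-i} + (1/2)·C(m, m/2)·α^{m/2} − 1. -/
/-! Write `n = ∏ pᵢ^α`. An ideal of `ℤ/nℤ` is `(d)` for a unique `d ∣ n`, and `d` is determined
by its exponent vector, so the ideal lattice is `ι → C` for the chain `C = (Fin (α+1))ᵒᵈ`, with
`⊓` computed coordinatewise. Two ideals thus meet non-trivially iff the supports `{i | xᵢ ≠ ⊥}` of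
their vectors intersect, and there are `α^#S` vectors with support `S`.

Let `𝒜` be a maximal intersecting family of subsets of `ι`: the sets of size `> m/2` together with
the half-size sets containing a fixed index. The vertices with support in `𝒜` form a clique. Any
other vertex has a support `S` with `Sᶜ ∈ 𝒜` and `#S ≤ #Sᶜ`, so the fibre over `S` injects into
the fibre over `Sᶜ`; colouring each such vertex by its image, which is never adjacent to it, uses
only the clique's vertices as colours. Hence clique number and chromatic number both equal the
size of that clique, which is `∑_{S ∈ 𝒜} α^#S - 1`. -/

open Finset SimpleGraph

theorem Finset.exists_mapsTo_injOn_of_card_le {α β : Type*} [Nonempty β] {s : Finset α}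
    {t : Finset β} (h : #s ≤ #t) : ∃ f : α → β, Set.MapsTo f s t ∧ Set.InjOn f s :=
  s.finite_toSet.exists_injOn_of_encard_le (t := (t : Set β)) (by
    rw [Set.encard_coe_eq_coe_finsetCard, Set.encard_coe_eq_coe_finsetCard]
    exact_mod_cast h)

section SupportGraph

variable {V ι : Type*} [Fintype V] [DecidableEq ι] {G : SimpleGraph V}
  {s : V → Finset ι} {𝒜 : Finset (Finset ι)}

theorem isClique_filter_mem (hG : ∀ v w, G.Adj v w ↔ v ≠ w ∧ ¬Disjoint (s v) (s w))
    (h𝒜 : (𝒜 : Set (Finset ι)).Intersecting) : G.IsClique ({v | s v ∈ 𝒜} : Finset V) := by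
  intro v hv w hw hvw
  simp only [coe_filter, mem_univ, true_and, Set.mem_ofPred_eq] at hv hw
  exact (hG v w).2 ⟨hvw, h𝒜 hv hw⟩

variable [Fintype ι]

theorem colorable_card_filter_mem (hG : ∀ v w, G.Adj v w ↔ v ≠ w ∧ ¬Disjoint (s v) (s w))
    (h𝒜max : ∀ S ∉ 𝒜, Sᶜ ∈ 𝒜) (hfib : ∀ S ∉ 𝒜, #{v | s v = S} ≤ #{v | s v = Sᶜ}) :
    G.Colorable #{v | s v ∈ 𝒜} := by
  rcases isEmpty_or_nonempty V with hV | hV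
  · exact .of_isEmpty _
  choose! f hf_maps hf_inj using fun S (hS : S ∉ 𝒜) => by
    simpa using exists_mapsTo_injOn_of_card_le (hfib S hS)
  let c : V → {v // s v ∈ 𝒜} := fun v =>
    if h : s v ∈ 𝒜 then ⟨v, h⟩ else ⟨f (s v) v, (hf_maps _ h rfl).symm ▸ h𝒜max _ h⟩
  have hc_good : ∀ v, s v ∈ 𝒜 → (c v).1 = v := fun v h => by simp [c, h]
  have hc_bad : ∀ v, s v ∉ 𝒜 → (c v).1 = f (s v) v := fun v h => by simp [c, h]
  have hc : ∀ {v w}, G.Adj v w → c v ≠ c w := by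
    intro v w hadj hcw
    obtain ⟨hvw, hdisj⟩ := (hG v w).1 hadj
    replace hcw := congrArg Subtype.val hcw
    by_cases hv : s v ∈ 𝒜 <;> by_cases hw : s w ∈ 𝒜
    · exact hvw (by rwa [hc_good v hv, hc_good w hw] at hcw)
    · rw [hc_good v hv, hc_bad w hw] at hcw
      exact hdisj (by rw [hcw, hf_maps _ hw rfl]; exact disjoint_compl_left)
    · rw [hc_bad v hv, hc_good w hw] at hcw
      exact hdisj (by rw [← hcw, hf_maps _ hv rfl]; exact disjoint_compl_right)
    · rw [hc_bad v hv, hc_bad w hw] at hcw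
      have hsvw : s w = s v := compl_injective <| by
        rw [← hf_maps _ hv rfl, ← hf_maps _ hw rfl, hcw]
      rw [hsvw] at hcw
      exact hvw (hf_inj _ hv rfl hsvw hcw)
  simpa [Fintype.card_subtype] using (Coloring.mk c hc).colorable

theorem chromaticNumber_eq_card_filter_mem
    (hG : ∀ v w, G.Adj v w ↔ v ≠ w ∧ ¬Disjoint (s v) (s w))
    (h𝒜 : (𝒜 : Set (Finset ι)).Intersecting) (h𝒜max : ∀ S ∉ 𝒜, Sᶜ ∈ 𝒜)
    (hfib : ∀ S ∉ 𝒜, #{v | s v = S} ≤ #{v | s v = Sᶜ}) :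
    G.chromaticNumber = #{v | s v ∈ 𝒜} :=
  le_antisymm (colorable_card_filter_mem hG h𝒜max hfib).chromaticNumber_le
    (isClique_filter_mem hG h𝒜).card_le_chromaticNumber

theorem cliqueNum_eq_card_filter_mem
    (hG : ∀ v w, G.Adj v w ↔ v ≠ w ∧ ¬Disjoint (s v) (s w))
    (h𝒜 : (𝒜 : Set (Finset ι)).Intersecting) (h𝒜max : ∀ S ∉ 𝒜, Sᶜ ∈ 𝒜)
    (hfib : ∀ S ∉ 𝒜, #{v | s v = S} ≤ #{v | s v = Sᶜ}) :
    G.cliqueNum = #{v | s v ∈ 𝒜} := by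
  refine le_antisymm ?_ (isClique_filter_mem hG h𝒜).card_le_cliqueNum
  exact_mod_cast G.cliqueNum_le_chromaticNumber.trans
    (chromaticNumber_eq_card_filter_mem hG h𝒜 h𝒜max hfib).le

end SupportGraph

def meetGraph (L : Type*) [Lattice L] [BoundedOrder L] : SimpleGraph {x : L // x ≠ ⊥ ∧ x ≠ ⊤} where
  Adj x y := x ≠ y ∧ x.1 ⊓ y.1 ≠ ⊥
  symm := ⟨by rintro x y ⟨h1, h2⟩; exact ⟨h1.symm, by rwa [inf_comm]⟩⟩
  loopless := ⟨by rintro x ⟨h, -⟩; exact h rfl⟩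

theorem interGraph_eq_meetGraph (R : Type*) [CommRing R] : interGraph R = meetGraph (Ideal R) :=
  rfl

def OrderIso.meetGraph {L L' : Type*} [Lattice L] [BoundedOrder L] [Lattice L'] [BoundedOrder L']
    (e : L ≃o L') : meetGraph L ≃g meetGraph L' where
  toEquiv := e.toEquiv.subtypeEquiv fun x => by simp
  map_rel_iff' {x y} := by
    simp only [_root_.meetGraph, Equiv.subtypeEquiv_apply, ne_eq, Subtype.mk.injEq,
      OrderIso.coe_toEquiv]
    rw [← map_inf, map_eq_bot_iff, e.injective.eq_iff, Subtype.ext_iff]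

theorem SimpleGraph.Iso.isNClique_map {V W : Type*} {G : SimpleGraph V} {H : SimpleGraph W}
    (e : G ≃g H) {n : ℕ} {s : Finset V} (h : G.IsNClique n s) :
    H.IsNClique n (s.map e.toEquiv.toEmbedding) := by
  refine ⟨?_, by rw [card_map, h.card_eq]⟩
  rw [coe_map]
  rintro _ ⟨a, ha, rfl⟩ _ ⟨b, hb, rfl⟩ hab
  exact e.map_adj_iff.2 (h.isClique ha hb (ne_of_apply_ne _ hab))

theorem SimpleGraph.Iso.cliqueNum_eq {V W : Type*} {G : SimpleGraph V} {H : SimpleGraph W}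
    (e : G ≃g H) : G.cliqueNum = H.cliqueNum := by
  simp only [cliqueNum]
  congr 1
  ext n
  exact ⟨fun ⟨s, hs⟩ => ⟨_, e.isNClique_map hs⟩, fun ⟨s, hs⟩ => ⟨_, e.symm.isNClique_map hs⟩⟩

section ChainPower

variable {ι C : Type*} [Fintype ι] [LinearOrder C] [BoundedOrder C]

def botSupport (x : ι → C) : Finset ι := {i | x i ≠ ⊥}

theorem inf_eq_bot_iff_disjoint_botSupport (x y : ι → C) :
    x ⊓ y = ⊥ ↔ Disjoint (botSupport x) (botSupport y) := by
  simp [funext_iff, Finset.disjoint_left, botSupport, or_iff_not_imp_left]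

theorem botSupport_eq_empty_iff {x : ι → C} : botSupport x = ∅ ↔ x = ⊥ := by
  simp [botSupport, filter_eq_empty_iff, funext_iff]

theorem botSupport_top [Nontrivial C] : botSupport (⊤ : ι → C) = univ := by
  simp [botSupport]

theorem card_botSupport_eq [DecidableEq ι] [Fintype C] (S : Finset ι) :
    #{x : ι → C | botSupport x = S} = (Fintype.card C - 1) ^ #S := by
  have : ({x : ι → C | botSupport x = S} : Finset _) =
      Fintype.piFinset fun i => if i ∈ S then ({c | c ≠ ⊥} : Finset C) else {⊥} := by
    ext x
    simp only [mem_filter, mem_univ, true_and, Fintype.mem_piFinset, botSupport, Finset.ext_iff]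
    refine forall_congr' fun i => ?_
    split_ifs with h <;> simp [h]
  simp [this, apply_ite Finset.card, filter_ne']

theorem card_filter_val (Q : (ι → C) → Prop) [DecidableEq ι] [Fintype C] [DecidablePred Q] :
    #{v : {x : ι → C // x ≠ ⊥ ∧ x ≠ ⊤} | Q v.1} = #{x | (x ≠ ⊥ ∧ x ≠ ⊤) ∧ Q x} := by
  rw [← Fintype.card_subtype, ← Fintype.card_subtype]
  exact Fintype.card_congr (Equiv.subtypeSubtypeEquivSubtypeInter _ Q)

theorem meetGraph_adj_iff {x y : {x : ι → C // x ≠ ⊥ ∧ x ≠ ⊤}} :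
    (meetGraph (ι → C)).Adj x y ↔ x ≠ y ∧ ¬Disjoint (botSupport x.1) (botSupport y.1) := by
  rw [← inf_eq_bot_iff_disjoint_botSupport]
  rfl

variable [DecidableEq ι] [Fintype C] [Nontrivial C]

theorem card_filter_botSupport_le_card_filter_botSupport_compl {S : Finset ι} (hS : #S ≤ #Sᶜ) :
    #{v : {x : ι → C // x ≠ ⊥ ∧ x ≠ ⊤} | botSupport v.1 = S} ≤
      #{v : {x : ι → C // x ≠ ⊥ ∧ x ≠ ⊤} | botSupport v.1 = Sᶜ} := by
  rw [card_filter_val (botSupport · = S), card_filter_val (botSupport · = Sᶜ)]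
  rcases S.eq_empty_or_nonempty with rfl | hne
  · rw [card_eq_zero.2 (filter_eq_empty_iff.2 fun x _ h => h.1.1 (botSupport_eq_empty_iff.1 h.2))]
    exact Nat.zero_le _
  have hSc : Sᶜ.Nonempty := card_pos.1 ((card_pos.2 hne).trans_le hS)
  have hC : 1 ≤ Fintype.card C - 1 := by have := Fintype.one_lt_card (α := C); omega
  calc #{x : ι → C | (x ≠ ⊥ ∧ x ≠ ⊤) ∧ botSupport x = S}
      ≤ #{x : ι → C | botSupport x = S} := card_le_card (monotone_filter_right _ fun _ _ h => h.2)
    _ = (Fintype.card C - 1) ^ #S := card_botSupport_eq S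
    _ ≤ (Fintype.card C - 1) ^ #Sᶜ := Nat.pow_le_pow_right hC hS
    _ = #{x : ι → C | botSupport x = Sᶜ} := (card_botSupport_eq _).symm
    _ = #{x : ι → C | (x ≠ ⊥ ∧ x ≠ ⊤) ∧ botSupport x = Sᶜ} := by
      refine congrArg card (filter_congr fun x _ => ⟨fun hx => ⟨⟨?_, ?_⟩, hx⟩, And.right⟩)
      · rw [Ne, ← botSupport_eq_empty_iff, hx]
        exact hSc.ne_empty
      · rintro rfl
        rw [botSupport_top, eq_comm, compl_eq_univ_iff] at hx
        exact hne.ne_empty hx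

theorem card_filter_botSupport_mem {𝒜 : Finset (Finset ι)} (hempty : ∅ ∉ 𝒜) (huniv : univ ∈ 𝒜) :
    #{v : {x : ι → C // x ≠ ⊥ ∧ x ≠ ⊤} | botSupport v.1 ∈ 𝒜} =
      ∑ S ∈ 𝒜, (Fintype.card C - 1) ^ #S - 1 := by
  have hfilter : ({x : ι → C | (x ≠ ⊥ ∧ x ≠ ⊤) ∧ botSupport x ∈ 𝒜} : Finset _) =
      ({x : ι → C | botSupport x ∈ 𝒜} : Finset _).erase ⊤ := by
    ext x
    simp only [mem_filter, mem_univ, true_and, mem_erase]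
    refine ⟨fun h => ⟨h.1.2, h.2⟩, fun h => ⟨⟨?_, h.1⟩, h.2⟩⟩
    rintro rfl
    exact hempty (by simpa [botSupport] using h.2)
  rw [card_filter_val (botSupport · ∈ 𝒜), hfilter, card_erase_of_mem (by simpa [botSupport_top]),
    card_eq_sum_card_fiberwise (f := botSupport) (t := 𝒜) fun x hx => by simpa using hx]
  congr 1
  refine sum_congr rfl fun S hS => ?_
  rw [filter_filter, ← card_botSupport_eq S]
  congr 1
  exact filter_congr fun x _ => ⟨And.right, fun h => ⟨h ▸ hS, h⟩⟩

end ChainPower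

section HalfFamily

variable {ι : Type*} [Fintype ι] {k : ℕ}

theorem sum_pow_card_filter_lt (hι : Fintype.card ι = 2 * k) (a : ℕ) :
    ∑ S : Finset ι with k < #S, a ^ #S = ∑ i ∈ range k, (2 * k).choose i * a ^ (2 * k - i) := by
  rw [sum_filter, ← powerset_univ, sum_powerset_apply_card (fun j => if k < j then a ^ j else 0),
    card_univ, hι, ← sum_range_reflect, show 2 * k + 1 = k + (k + 1) by ring, sum_range_add,
    sum_eq_zero (s := range (k + 1)) fun i _ => by rw [if_neg (by omega), smul_zero], add_zero]
  refine sum_congr rfl fun i hi => ?_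
  rw [mem_range] at hi
  rw [if_pos (by omega), smul_eq_mul, show k + (k + 1) - 1 - i = 2 * k - i by omega,
    Nat.choose_symm (by omega)]

variable [DecidableEq ι]

def halfFamily (k : ℕ) (i₀ : ι) : Finset (Finset ι) :=
  ({S | k < #S} : Finset (Finset ι)) ∪ {S ∈ powersetCard k (univ : Finset ι) | i₀ ∈ S}

theorem mem_halfFamily {i₀ : ι} {S : Finset ι} :
    S ∈ halfFamily k i₀ ↔ k < #S ∨ #S = k ∧ i₀ ∈ S := by
  simp [halfFamily]

variable (hι : Fintype.card ι = 2 * k) (i₀ : ι)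
include hι

theorem intersecting_halfFamily : (halfFamily k i₀ : Set (Finset ι)).Intersecting := by
  intro S hS T hT hST
  rw [mem_coe, mem_halfFamily] at hS hT
  have := card_le_univ (S ∪ T)
  rw [card_union_of_disjoint hST, hι] at this
  rcases hS with hS | ⟨hS, hS₀⟩ <;> rcases hT with hT | ⟨hT, hT₀⟩
  · omega
  · omega
  · omega
  · exact disjoint_left.1 hST hS₀ hT₀

theorem compl_mem_halfFamily {S : Finset ι} (hS : S ∉ halfFamily k i₀) :
    Sᶜ ∈ halfFamily k i₀ := by
  rw [mem_halfFamily] at hS ⊢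
  rw [card_compl, hι, mem_compl]
  have := card_le_univ S
  rw [hι] at this
  by_cases h : i₀ ∈ S <;> simp [h] at hS ⊢ <;> omega

theorem card_le_card_compl_of_notMem_halfFamily {S : Finset ι} (hS : S ∉ halfFamily k i₀) :
    #S ≤ #Sᶜ := by
  rw [mem_halfFamily] at hS
  rw [card_compl, hι]
  omega

theorem two_mul_card_filter_mem_powersetCard :
    2 * #{S ∈ powersetCard k (univ : Finset ι) | i₀ ∈ S} = (2 * k).choose k := by
  have hcompl : #{S ∈ powersetCard k (univ : Finset ι) | i₀ ∈ S} =
      #{S ∈ powersetCard k (univ : Finset ι) | i₀ ∉ S} := by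
    refine card_nbij' compl compl ?_ ?_ (fun S _ => compl_compl S) (fun S _ => compl_compl S)
    all_goals
      intro S hS
      simp only [coe_filter, mem_powersetCard, subset_univ, true_and, Set.mem_ofPred_eq,
        card_compl, hι, mem_compl] at hS ⊢
      have := card_le_univ S
      rw [hι] at this
      exact ⟨by omega, by simpa using hS.2⟩
  rw [two_mul]
  nth_rw 2 [hcompl]
  rw [card_filter_add_card_filter_not, card_powersetCard, card_univ, hι]

theorem sum_pow_card_halfFamily (a : ℕ) :
    ∑ S ∈ halfFamily k i₀, a ^ #S =
      ∑ i ∈ range k, (2 * k).choose i * a ^ (2 * k - i) + (2 * k).choose k * a ^ k / 2 := by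
  rw [halfFamily, sum_union, sum_pow_card_filter_lt hι,
    ← two_mul_card_filter_mem_powersetCard hι i₀, mul_assoc, Nat.mul_div_cancel_left _ two_pos]
  · congr 1
    rw [sum_congr rfl fun S hS => by rw [(mem_powersetCard.1 (mem_filter.1 hS).1).2], sum_const,
      smul_eq_mul]
  · refine disjoint_left.2 fun S h₁ h₂ => ?_
    simp only [mem_filter, mem_univ, true_and, mem_powersetCard] at h₁ h₂
    omega

end HalfFamily

section ChainPowerMeetGraph

variable {ι C : Type*} [Fintype ι] [DecidableEq ι] [LinearOrder C] [BoundedOrder C]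
  [Fintype C] [Nontrivial C] {k : ℕ}

theorem card_filter_botSupport_mem_halfFamily (hι : Fintype.card ι = 2 * k) (i₀ : ι) :
    #{v : {x : ι → C // x ≠ ⊥ ∧ x ≠ ⊤} | botSupport v.1 ∈ halfFamily k i₀} =
      ∑ i ∈ range k, (2 * k).choose i * (Fintype.card C - 1) ^ (2 * k - i) +
        (2 * k).choose k * (Fintype.card C - 1) ^ k / 2 - 1 := by
  have hempty := (intersecting_halfFamily hι i₀).bot_notMem
  rw [card_filter_botSupport_mem hempty (by simpa using compl_mem_halfFamily hι i₀ hempty),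
    sum_pow_card_halfFamily hι]

theorem chromaticNumber_meetGraph_pi [Nonempty ι] (hι : Fintype.card ι = 2 * k) :
    (meetGraph (ι → C)).chromaticNumber =
      (∑ i ∈ range k, (2 * k).choose i * (Fintype.card C - 1) ^ (2 * k - i) +
        (2 * k).choose k * (Fintype.card C - 1) ^ k / 2 - 1 : ℕ) := by
  let i₀ := Classical.arbitrary ι
  rw [← card_filter_botSupport_mem_halfFamily hι i₀]
  exact chromaticNumber_eq_card_filter_mem (fun _ _ => meetGraph_adj_iff)
    (intersecting_halfFamily hι i₀) (fun _ => compl_mem_halfFamily hι i₀)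
    fun _ hS => card_filter_botSupport_le_card_filter_botSupport_compl
      (card_le_card_compl_of_notMem_halfFamily hι i₀ hS)

theorem cliqueNum_meetGraph_pi [Nonempty ι] (hι : Fintype.card ι = 2 * k) :
    (meetGraph (ι → C)).cliqueNum =
      ∑ i ∈ range k, (2 * k).choose i * (Fintype.card C - 1) ^ (2 * k - i) +
        (2 * k).choose k * (Fintype.card C - 1) ^ k / 2 - 1 := by
  let i₀ := Classical.arbitrary ι
  rw [← card_filter_botSupport_mem_halfFamily hι i₀]
  exact cliqueNum_eq_card_filter_mem (fun _ _ => meetGraph_adj_iff)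
    (intersecting_halfFamily hι i₀) (fun _ => compl_mem_halfFamily hι i₀)
    fun _ hS => card_filter_botSupport_le_card_filter_botSupport_compl
      (card_le_card_compl_of_notMem_halfFamily hι i₀ hS)

end ChainPowerMeetGraph

section PrimePowerProducts

variable {ι : Type*} [Fintype ι] {p : ι → ℕ}

theorem factorization_prod_pow_of_prime (hp : ∀ i, (p i).Prime) (β : ι → ℕ) :
    (∏ i, p i ^ β i).factorization = ∑ i, Finsupp.single (p i) (β i) := by
  rw [Nat.factorization_prod fun i _ => pow_ne_zero _ (hp i).ne_zero]
  exact sum_congr rfl fun i _ => (hp i).factorization_pow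

theorem prod_pow_ne_zero_of_prime (hp : ∀ i, (p i).Prime) (β : ι → ℕ) : ∏ i, p i ^ β i ≠ 0 :=
  prod_ne_zero_iff.2 fun i _ => pow_ne_zero _ (hp i).ne_zero

variable (hp : ∀ i, (p i).Prime) (hinj : Function.Injective p)
include hp hinj

theorem factorization_prod_pow_apply (β : ι → ℕ) (j : ι) :
    (∏ i, p i ^ β i).factorization (p j) = β j := by
  classical
  simp [factorization_prod_pow_of_prime hp, Finsupp.finsetSum_apply, Finsupp.single_apply,
    hinj.eq_iff]

theorem prod_pow_dvd_prod_pow_iff {β γ : ι → ℕ} :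
    ∏ i, p i ^ β i ∣ ∏ i, p i ^ γ i ↔ β ≤ γ := by
  refine ⟨fun h i => ?_, fun h => prod_dvd_prod_of_dvd _ _ fun i _ => pow_dvd_pow _ (h i)⟩
  have := (Nat.factorization_le_iff_dvd (prod_pow_ne_zero_of_prime hp β)
    (prod_pow_ne_zero_of_prime hp γ)).2 h (p i)
  rwa [factorization_prod_pow_apply hp hinj, factorization_prod_pow_apply hp hinj] at this

theorem exists_eq_prod_pow_of_dvd {d : ℕ} {γ : ι → ℕ} (hd : d ∣ ∏ i, p i ^ γ i) :
    ∃ β ≤ γ, d = ∏ i, p i ^ β i := by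
  have hN := prod_pow_ne_zero_of_prime hp γ
  have hd0 : d ≠ 0 := ne_zero_of_dvd_ne_zero hN hd
  have hle := (Nat.factorization_le_iff_dvd hd0 hN).2 hd
  refine ⟨fun i => d.factorization (p i), fun i => ?_, Nat.eq_of_factorization_eq hd0
    (prod_pow_ne_zero_of_prime hp _) fun q => ?_⟩
  · simpa [factorization_prod_pow_apply hp hinj] using hle (p i)
  · by_cases hq : ∃ j, p j = q
    · obtain ⟨j, rfl⟩ := hq
      rw [factorization_prod_pow_apply hp hinj]
    · simp only [not_exists] at hq
      have hzero : ∀ β : ι → ℕ, (∏ i, p i ^ β i).factorization q = 0 := fun β => by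
        simp [factorization_prod_pow_of_prime hp, Finsupp.finsetSum_apply, hq]
      rw [hzero, Nat.eq_zero_of_le_zero ((hle q).trans (hzero γ).le)]

end PrimePowerProducts

namespace ZMod

theorem span_natCast_le_span_natCast_iff {n a b : ℕ} (hb : b ∣ n) :
    Ideal.span {(a : ZMod n)} ≤ Ideal.span {(b : ZMod n)} ↔ b ∣ a := by
  rw [Ideal.span_singleton_le_span_singleton]
  refine ⟨fun ⟨c, hc⟩ => ?_, fun h => Nat.cast_dvd_cast h⟩
  obtain ⟨z, rfl⟩ := intCast_surjective c
  have : (n : ℤ) ∣ b * z - a := by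
    rw [← intCast_eq_intCast_iff_dvd_sub]
    push_cast
    exact hc
  have := (Int.natCast_dvd_natCast.2 hb).trans this
  exact Int.natCast_dvd_natCast.1 ((dvd_sub_right (dvd_mul_right _ _)).1 this)

theorem exists_dvd_and_eq_span_natCast {n : ℕ} (I : Ideal (ZMod n)) :
    ∃ d, d ∣ n ∧ I = Ideal.span {(d : ZMod n)} := by
  obtain ⟨z, hz⟩ := (IsPrincipalIdealRing.principal (I.comap (Int.castRingHom (ZMod n)))).principal
  rw [Ideal.submodule_span_eq, ← Int.span_natAbs] at hz
  have hn : (n : ℤ) ∈ I.comap (Int.castRingHom (ZMod n)) := by simp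
  refine ⟨z.natAbs, ?_, ?_⟩
  · rw [hz, Ideal.mem_span_singleton] at hn
    exact Int.natCast_dvd_natCast.1 hn
  · rw [← Ideal.map_comap_of_surjective (Int.castRingHom (ZMod n)) ZMod.intCast_surjective I, hz,
      Ideal.map_span, Set.image_singleton]
    simp

end ZMod

section IdealOrderIso

variable {ι : Type*} [Fintype ι] {p : ι → ℕ} (hp : ∀ i, (p i).Prime) (hinj : Function.Injective p)

open OrderDual in
noncomputable def idealOrderIso (α : ℕ) :
    (ι → (Fin (α + 1))ᵒᵈ) ≃o Ideal (ZMod (∏ i, p i ^ α)) :=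
  OrderIso.ofSurjective
    (OrderEmbedding.ofMapLEIff
      (fun β => Ideal.span
        {((∏ i, p i ^ ((ofDual (β i) : Fin (α + 1)) : ℕ) : ℕ) : ZMod (∏ i, p i ^ α))})
      fun β γ => by
        rw [ZMod.span_natCast_le_span_natCast_iff ((prod_pow_dvd_prod_pow_iff hp hinj).2
          fun i => Nat.le_of_lt_succ (ofDual (γ i)).2), prod_pow_dvd_prod_pow_iff hp hinj]
        simp [Pi.le_def])
    fun I => by
      obtain ⟨d, hd, rfl⟩ := ZMod.exists_dvd_and_eq_span_natCast I
      obtain ⟨δ, hδ, rfl⟩ := exists_eq_prod_pow_of_dvd hp hinj hd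
      exact ⟨fun i => toDual ⟨δ i, Nat.lt_succ_of_le (hδ i)⟩, rfl⟩

end IdealOrderIso

theorem stmt9 (m α : ℕ) (hm : 2 ≤ m) (heven : Even m) (hα : 1 ≤ α)
    (p : Fin m → ℕ) (hp : ∀ i, (p i).Prime) (hinj : Function.Injective p)
    (n : ℕ) (hn : n = ∏ i, p i ^ α) :
    (interGraph (ZMod n)).cliqueNum =
      (∑ i ∈ Finset.range (m / 2), m.choose i * α ^ (m - i)) +
        m.choose (m / 2) * α ^ (m / 2) / 2 - 1 ∧
    (interGraph (ZMod n)).chromaticNumber =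
      (((∑ i ∈ Finset.range (m / 2), m.choose i * α ^ (m - i)) +
        m.choose (m / 2) * α ^ (m / 2) / 2 - 1 : ℕ) : ℕ∞) := by
  obtain ⟨k, rfl⟩ := heven
  subst hn
  have : Nonempty (Fin (k + k)) := ⟨⟨0, by omega⟩⟩
  have : Nontrivial (Fin (α + 1)) := Fin.nontrivial_iff_two_le.2 (by omega)
  have hι : Fintype.card (Fin (k + k)) = 2 * k := by simp [two_mul]
  have hC : Fintype.card (Fin (α + 1))ᵒᵈ - 1 = α := by simp
  have e := (idealOrderIso hp hinj α).meetGraph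
  rw [interGraph_eq_meetGraph, ← e.cliqueNum_eq, ← chromaticNumber_congr e,
    cliqueNum_meetGraph_pi hι, chromaticNumber_meetGraph_pi hι, hC,
    show (k + k) / 2 = k by omega, ← two_mul]
  exact ⟨rfl, rfl⟩
end
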